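/- arXiv:1001.2291 — 3 statements merged into one kernel-verified Lean document; each statement's English description precedes it below -/
import Mathlib

section
/- Let (G,X*) be a contracting self-similar action with tile T in the limit G-space and measure μ. Then the topological boundary ∂T of the tile T has μ-measure zero. -/
/-!
A point `w·g` of the limit space lies in exactly `|ends w|` tiles, where `ends w ⊆ N` is the set
of end vertices of left-infinite paths in the Moore diagram of the nucleus with output `w`. Every
union of tiles is closed, so a point lying in the minimal number `m` of tiles is interior to each
tile containing it; hence `∂𝒯` lies over sequences `w` with `|ends w| ≠ m`. If `|ends wmin| = m`,
a finite block of `wmin` already admits at most `m` path ends, so every such `w` avoids that block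
at all aligned positions, a Bernoulli-null event. The cylinder measures force the σ-algebra of `X`
to be discrete, so closed subsets of the limit space are measurable.
-/

open MeasureTheory ENNReal

/-- A self-similar action of the group `G` over the alphabet `X`, given by the action
`g(xw) = (toFun g x) ((res g x) w)` on words: `toFun g` is the action on the first letter and
`res g x = g|_x` is the restriction. -/
structure SSA (G X : Type*) [Group G] where
  toFun : G → X → X
  res : G → X → G
  toFun_one : ∀ x, toFun 1 x = x
  res_one : ∀ x, res 1 x = 1
  toFun_mul : ∀ g h x, toFun (g * h) x = toFun g (toFun h x)
  res_mul : ∀ g h x, res (g * h) x = res g (toFun h x) * res h x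

namespace SSA

variable {G X : Type*} [Group G]

/-- Restriction of `g` along a finite word (head of the list = first letter read):
`g|_{x₁x₂…xₙ} = g|_{x₁}|_{x₂}…|_{xₙ}`. -/
def resW (S : SSA G X) : G → List X → G
  | g, [] => g
  | g, x :: v => S.resW (S.res g x) v

/-- Action of `g` on a finite word (head of the list = first letter read):
`g(xw) = g(x) (g|_x)(w)`. -/
def actW (S : SSA G X) : G → List X → List X
  | _, [] => []
  | g, x :: v => S.toFun g x :: S.actW (S.res g x) v

/-- `N` is the nucleus of the (contracting) action: it is closed under restrictions, every
element restricts into `N` on all sufficiently long words, and it is the smallest such set. -/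
def IsNucleus (S : SSA G X) (N : Finset G) : Prop :=
  (∀ g ∈ N, ∀ x : X, S.res g x ∈ N) ∧
  (∀ g : G, ∃ k : ℕ, ∀ v : List X, k ≤ v.length → S.resW g v ∈ N) ∧
  ∀ N' : Finset G, (∀ g : G, ∃ k : ℕ, ∀ v : List X, k ≤ v.length → S.resW g v ∈ N') → N ⊆ N'

/-- There is a left-infinite path in the Moore diagram of the nucleus `N` which ends at the
vertex `h` and whose `i`-th edge is labeled `(w i, w' i)` (sequences are left-infinite,
index `0` being the rightmost letter): the vertices `q i ∈ N` satisfy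
`q (i+1)|_{w i} = q i` and `q (i+1) (w i) = w' i`, with `q 0 = h`. -/
def MoorePath (S : SSA G X) (N : Finset G) (w w' : ℕ → X) (h : G) : Prop :=
  ∃ q : ℕ → G, q 0 = h ∧ (∀ i, q i ∈ N) ∧
    ∀ i : ℕ, S.res (q (i + 1)) (w i) = q i ∧ S.toFun (q (i + 1)) (w i) = w' i

/-- The asymptotic equivalence relation on `X^{-ω} × G`: `w·g ~ w'·g'` iff there is a
left-infinite path in the Moore diagram of the nucleus labeled `(w, w')` ending at `g'g⁻¹`. -/
def AsympEquiv (S : SSA G X) (N : Finset G) (p q : (ℕ → X) × G) : Prop :=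
  S.MoorePath N p.1 q.1 (q.2 * p.2⁻¹)

/-- The limit `G`-space: the quotient of `X^{-ω} × G` by the asymptotic equivalence relation. -/
def LimitGSpace (S : SSA G X) (N : Finset G) : Type _ :=
  Quot (S.AsympEquiv N)

/-- The tile `𝒯_v ⊂ J_G` for a finite word `v` (encoded as a list whose head is the rightmost
letter): the image in the limit `G`-space of `X^{-ω}v × {1}`.  For `v = []` this is the tile `𝒯`,
the image of `X^{-ω} × {1}`. -/
def Tile (S : SSA G X) (N : Finset G) (v : List X) : Set (S.LimitGSpace N) :=
  Quot.mk (S.AsympEquiv N) ''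
    {p : (ℕ → X) × G | p.2 = 1 ∧ ∀ (i : ℕ) (h : i < v.length), p.1 i = v.get ⟨i, h⟩}

/-- The translated tile `𝒯·g`: the image in the limit `G`-space of `X^{-ω} × {g}`. -/
def TileT (S : SSA G X) (N : Finset G) (g : G) : Set (S.LimitGSpace N) :=
  Quot.mk (S.AsympEquiv N) '' {p : (ℕ → X) × G | p.2 = g}

variable [MeasurableSpace X] [MeasurableSpace G]

instance (S : SSA G X) (N : Finset G) : MeasurableSpace (S.LimitGSpace N) :=
  inferInstanceAs (MeasurableSpace (Quot (S.AsympEquiv N)))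

/-- The measure `μ` on the limit `G`-space: the push-forward under the quotient map of the
product of the (uniform Bernoulli) measure `μ0` on `X^{-ω}` and the counting measure on `G`. -/
noncomputable def limitMeasure (S : SSA G X) (N : Finset G) (μ0 : Measure (ℕ → X)) :
    Measure (S.LimitGSpace N) :=
  Measure.map (Quot.mk (S.AsympEquiv N)) (μ0.prod Measure.count)

end SSA

/-- The cylinder subset of `X^{-ω}` of sequences whose last `u.length` letters spell `u`
(head of `u` = rightmost letter). -/
def Cyl {X : Type*} (u : List X) : Set (ℕ → X) :=
  {w | ∀ (i : ℕ) (h : i < u.length), w i = u.get ⟨i, h⟩}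

instance {G X : Type*} [Group G] [TopologicalSpace X] [TopologicalSpace G]
    (S : SSA G X) (N : Finset G) : TopologicalSpace (S.LimitGSpace N) :=
  inferInstanceAs (TopologicalSpace (Quot (S.AsympEquiv N)))

section Topology

variable {Y ι : Type*} [TopologicalSpace Y] {T : ι → Set Y}

theorem isClosed_of_forall_isClosed_slice {D : Type*} [TopologicalSpace D] [DiscreteTopology D]
    {A : Set (Y × D)} (hA : ∀ d, IsClosed {y | (y, d) ∈ A}) : IsClosed A := by
  rw [← isOpen_compl_iff, isOpen_prod_iff]
  intro y d hyd
  exact ⟨_, {d}, (hA d).isOpen_compl, isOpen_discrete _, hyd, rfl,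
    by rintro ⟨y', d'⟩ ⟨hy', rfl⟩; exact hy'⟩

theorem mem_interior_of_ncard_le (hT : ∀ K : Set ι, IsClosed (⋃ k ∈ K, T k)) {p : Y}
    (hp : {k | p ∈ T k}.Finite) (hmin : ∀ q, {k | p ∈ T k}.ncard ≤ {k | q ∈ T k}.ncard)
    {j : ι} (hj : p ∈ T j) : p ∈ interior (T j) := by
  refine mem_interior.2 ⟨(⋃ k ∈ {k | p ∉ T k}, T k)ᶜ, fun q hq => ?_, (hT _).isOpen_compl, ?_⟩
  · have hsub : {k | q ∈ T k} ⊆ {k | p ∈ T k} := fun k hk =>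
      by_contra fun hpk => hq (Set.mem_biUnion hpk hk)
    have heq := Set.eq_of_subset_of_ncard_le hsub (hmin q) hp
    exact (heq ▸ hj : j ∈ {k | q ∈ T k})
  · simp

theorem frontier_subset_setOf_ncard_ne (hT : ∀ K : Set ι, IsClosed (⋃ k ∈ K, T k))
    (hfin : ∀ p, {k | p ∈ T k}.Finite) {m : ℕ} (hm : ∀ q, m ≤ {k | q ∈ T k}.ncard) (j : ι) :
    frontier (T j) ⊆ {p | {k | p ∈ T k}.ncard ≠ m} := by
  intro p hp hpm
  have hpj : p ∈ T j := (by simpa using hT {j} : IsClosed (T j)).frontier_subset hp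
  exact hp.2 (mem_interior_of_ncard_le hT (hfin p) (fun q => hpm ▸ hm q) hpj)

end Topology

section Bernoulli

theorem mem_cyl_ofFn {X : Type*} {n : ℕ} {f : Fin n → X} {w : ℕ → X} :
    w ∈ Cyl (List.ofFn f) ↔ ∀ i : Fin n, w i = f i := by
  simp only [Cyl, Set.mem_ofPred_eq, List.length_ofFn, List.get_ofFn]
  exact ⟨fun h i => h i i.2, fun h i hi => h ⟨i, hi⟩⟩

theorem mem_cyl_singleton {X : Type*} {x : X} {w : ℕ → X} : w ∈ Cyl [x] ↔ w 0 = x := by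
  simp [Cyl]

variable {X : Type*} [Fintype X] [MeasurableSpace X] {μ0 : Measure (ℕ → X)}

theorem natCast_mul_inv_lt_one {k n : ℕ} (h : k < n) : (k : ℝ≥0∞) * (n : ℝ≥0∞)⁻¹ < 1 := by
  rw [← div_eq_mul_inv, ENNReal.div_lt_iff (Or.inl (by exact_mod_cast (k.zero_le.trans_lt h).ne'))
    (Or.inl (natCast_ne_top n)), one_mul]
  exact_mod_cast h

/-- If `x ≠ y` were not separated by measurable sets, every measurable set would be invariant under
swapping `x` and `y` letterwise, so the measurable hull of `Cyl [x]` would contain `Cyl [y]`, and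
the `n - 1` hulls of `Cyl [z]`, `z ≠ y`, would cover the space with total mass `(n - 1) / n < 1`. -/
theorem measurableSingletonClass_of_cyl
    (hμ0 : ∀ u : List X, μ0 (Cyl u) = ((Fintype.card X : ℝ≥0∞))⁻¹ ^ u.length) :
    MeasurableSingletonClass X := by
  classical
  suffices MeasurableSpace.SeparatesPoints X from inferInstance
  refine MeasurableSpace.separatesPoints_iff.2 fun x y hxy => by_contra fun hne => ?_
  let τ : (ℕ → X) → (ℕ → X) := fun w => Equiv.swap x y ∘ w
  have hτ : MeasurableSpace.pi ≤ MeasurableSpace.invariants τ := by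
    refine iSup_le fun i => MeasurableSpace.comap_le_iff_le_map.2 fun s hs =>
      ⟨measurable_pi_apply i hs, ?_⟩
    ext w
    simp only [τ, Set.mem_preimage, Function.comp_apply, Equiv.swap_apply_def]
    split_ifs with h1 h2
    · rw [h1, hxy s hs]
    · rw [h2, hxy s hs]
    · rfl
  have hcyl : Cyl [y] ⊆ toMeasurable μ0 (Cyl [x]) := fun w hw => by
    rw [← (hτ _ (measurableSet_toMeasurable μ0 _)).2]
    exact subset_toMeasurable μ0 _ (mem_cyl_singleton.2 (by simp [τ, mem_cyl_singleton.1 hw]))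
  have hcover : Set.univ ⊆ ⋃ z ∈ Finset.univ.erase y, toMeasurable μ0 (Cyl [z]) := by
    intro w _
    by_cases h0 : w 0 = y
    · exact Set.mem_biUnion (Finset.mem_erase.2 ⟨hne, Finset.mem_univ x⟩)
        (hcyl (mem_cyl_singleton.2 h0))
    · exact Set.mem_biUnion (Finset.mem_erase.2 ⟨h0, Finset.mem_univ _⟩)
        (subset_toMeasurable μ0 _ (mem_cyl_singleton.2 rfl))
  have hle : (1 : ℝ≥0∞) ≤ ((Finset.univ.erase y).card : ℝ≥0∞) * (Fintype.card X : ℝ≥0∞)⁻¹ :=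
    calc (1 : ℝ≥0∞) = μ0 Set.univ := by simpa [Cyl] using (hμ0 []).symm
      _ ≤ ∑ z ∈ Finset.univ.erase y, μ0 (toMeasurable μ0 (Cyl [z])) :=
        (measure_mono hcover).trans (measure_biUnion_finset_le _ _)
      _ = _ := by simp [measure_toMeasurable, hμ0]
  refine hle.not_gt (natCast_mul_inv_lt_one ?_)
  rw [Finset.card_erase_of_mem (Finset.mem_univ y), Finset.card_univ]
  exact Nat.sub_lt (Fintype.card_pos_iff.2 ⟨x⟩) one_pos

theorem measure_setOf_forall_block_ne_eq_zero [Nonempty X]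
    (hμ0 : ∀ u : List X, μ0 (Cyl u) = ((Fintype.card X : ℝ≥0∞))⁻¹ ^ u.length) {K : ℕ}
    (u : Fin K → X) : μ0 {w | ∀ j, (fun t : Fin K => w (K * j + t)) ≠ u} = 0 := by
  classical
  set a := Fintype.card X
  have hx : ((a ^ K - 1 : ℕ) : ℝ≥0∞) * ((a ^ K : ℕ) : ℝ≥0∞)⁻¹ < 1 :=
    natCast_mul_inv_lt_one (Nat.sub_lt (pow_pos Fintype.card_pos K) one_pos)
  refine le_antisymm (ge_of_tendsto' (ENNReal.tendsto_pow_atTop_nhds_zero_of_lt_one hx)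
    fun M => ?_) zero_le
  -- cover by the `(a ^ K - 1) ^ M` cylinders of length `M * K` whose `M` blocks all differ from `u`
  let V := Fintype.piFinset fun _ : Fin M => Finset.univ.erase u
  let e : Fin M × Fin K ≃ Fin (M * K) := finProdFinEquiv
  let flat (v : Fin M → Fin K → X) : List X := List.ofFn fun i => v (e.symm i).1 (e.symm i).2
  calc μ0 {w | ∀ j, (fun t : Fin K => w (K * j + t)) ≠ u}
      ≤ μ0 (⋃ v ∈ V, Cyl (flat v)) := measure_mono fun w hw =>
        Set.mem_biUnion (x := fun (j : Fin M) (t : Fin K) => w (K * j + t))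
          (Fintype.mem_piFinset.2 fun j => Finset.mem_erase.2 ⟨hw j, Finset.mem_univ _⟩)
          (mem_cyl_ofFn.2 fun i => by
            conv_lhs => rw [← e.apply_symm_apply i]
            rw [finProdFinEquiv_apply_val, add_comm])
    _ ≤ ∑ v ∈ V, μ0 (Cyl (flat v)) := measure_biUnion_finset_le V _
    _ = V.card * (a : ℝ≥0∞)⁻¹ ^ (M * K) := by simp [hμ0, flat]
    _ = _ := by
      rw [Fintype.card_piFinset, Finset.prod_const, Finset.card_erase_of_mem (Finset.mem_univ u),
        Finset.card_univ, Fintype.card_fun, Fintype.card_fin, Finset.card_univ, Fintype.card_fin]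
      push_cast
      rw [mul_pow, pow_mul', ENNReal.inv_pow]

end Bernoulli

namespace SSA

section Algebra

variable {G X : Type*} [Group G] {S : SSA G X} {N : Finset G}

theorem toFun_inv_right (S : SSA G X) (g : G) (x : X) : S.toFun g (S.toFun g⁻¹ x) = x := by
  rw [← S.toFun_mul, mul_inv_cancel, S.toFun_one]

theorem toFun_inv_left (S : SSA G X) (g : G) (x : X) : S.toFun g⁻¹ (S.toFun g x) = x := by
  rw [← S.toFun_mul, inv_mul_cancel, S.toFun_one]

theorem res_inv (S : SSA G X) (g : G) (x : X) : S.res g⁻¹ (S.toFun g x) = (S.res g x)⁻¹ := by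
  refine eq_inv_of_mul_eq_one_left ?_
  rw [← S.res_mul, inv_mul_cancel, S.res_one]

theorem exists_resW_eq_of_run (S : SSA G X) {q : ℕ → G} {w : ℕ → X}
    (hrun : ∀ i, S.res (q (i + 1)) (w i) = q i) (i m : ℕ) :
    ∃ v : List X, v.length = m ∧ S.resW (q (i + m)) v = q i := by
  induction m with
  | zero => exact ⟨[], rfl, rfl⟩
  | succ m ih =>
    obtain ⟨v, hv, hres⟩ := ih
    exact ⟨w (i + m) :: v, by simp [hv], by rw [resW, ← add_assoc, hrun, hres]⟩

theorem IsNucleus.mem_of_run (hN : S.IsNucleus N) {F : Finset G} {q : ℕ → G} {w : ℕ → X}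
    (hF : ∀ i, q i ∈ F) (hrun : ∀ i, S.res (q (i + 1)) (w i) = q i) (i : ℕ) : q i ∈ N := by
  choose k hk using hN.2.1
  obtain ⟨v, hv, hres⟩ := S.exists_resW_eq_of_run hrun i (F.sup k)
  rw [← hres]
  exact hk _ v ((F.le_sup (hF _)).trans hv.ge)

theorem IsNucleus.one_mem [Nonempty X] (hN : S.IsNucleus N) : (1 : G) ∈ N :=
  hN.mem_of_run (F := {1}) (w := fun _ => Classical.arbitrary X)
    (fun _ => Finset.mem_singleton_self 1) (fun _ => S.res_one _) 0

theorem moorePath_refl (h1 : (1 : G) ∈ N) (w : ℕ → X) : S.MoorePath N w w 1 :=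
  ⟨fun _ => 1, rfl, fun _ => h1, fun _ => ⟨S.res_one _, S.toFun_one _⟩⟩

theorem MoorePath.symm (hN : S.IsNucleus N) {w w' : ℕ → X} {h : G}
    (hp : S.MoorePath N w w' h) : S.MoorePath N w' w h⁻¹ := by
  classical
  obtain ⟨q, rfl, hqN, hq⟩ := hp
  have hrun : ∀ i, S.res (q (i + 1))⁻¹ (w' i) = (q i)⁻¹ := fun i => by
    rw [← (hq i).2, res_inv, (hq i).1]
  refine ⟨fun i => (q i)⁻¹, rfl, hN.mem_of_run (F := N.image (·⁻¹))
    (fun i => Finset.mem_image_of_mem _ (hqN i)) hrun, fun i => ⟨hrun i, ?_⟩⟩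
  rw [← (hq i).2, toFun_inv_left]

theorem MoorePath.trans (hN : S.IsNucleus N) {w w' w'' : ℕ → X} {h h' : G}
    (hp : S.MoorePath N w w' h) (hp' : S.MoorePath N w' w'' h') :
    S.MoorePath N w w'' (h' * h) := by
  classical
  obtain ⟨q, rfl, hqN, hq⟩ := hp
  obtain ⟨r, rfl, hrN, hr⟩ := hp'
  have hrun : ∀ i, S.res (r (i + 1) * q (i + 1)) (w i) = r i * q i := fun i => by
    rw [S.res_mul, (hq i).2, (hr i).1, (hq i).1]
  refine ⟨fun i => r i * q i, rfl, hN.mem_of_run (F := Finset.image₂ (· * ·) N N)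
    (fun i => Finset.mem_image₂_of_mem (hrN i) (hqN i)) hrun, fun i => ⟨hrun i, ?_⟩⟩
  rw [S.toFun_mul, (hq i).2, (hr i).2]

theorem IsNucleus.equivalence [Nonempty X] (hN : S.IsNucleus N) :
    Equivalence (S.AsympEquiv N) where
  refl p := by simpa [AsympEquiv] using moorePath_refl hN.one_mem p.1
  symm hpq := by simpa [AsympEquiv] using hpq.symm hN
  trans hpq hqr := by simpa [AsympEquiv, mul_assoc] using hpq.trans hN hqr

theorem IsNucleus.mk_eq_mk_iff [Nonempty X] (hN : S.IsNucleus N) (p q : (ℕ → X) × G) :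
    Quot.mk (S.AsympEquiv N) p = Quot.mk (S.AsympEquiv N) q ↔ S.AsympEquiv N p q :=
  Quot.eq.trans hN.equivalence.eqvGen_iff

end Algebra

section Ends

variable {G X : Type*} [Group G] (S : SSA G X) (N : Finset G)

def resOut (a : G) (y : X) : G := S.res a (S.toFun a⁻¹ y)

/-- `w·g` lies in the tile `𝒯·(h⁻¹g)` exactly when `h ∈ ends w`.  Paths are read along their
output letters, which makes them deterministic towards the end vertex. -/
def ends (w : ℕ → X) : Set G :=
  {h | ∃ q : ℕ → G, q 0 = h ∧ (∀ i, q i ∈ N) ∧ ∀ i, S.resOut (q (i + 1)) (w i) = q i}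

def endsUpTo (n : ℕ) (w : ℕ → X) : Set G :=
  {h | ∃ q : ℕ → G, q 0 = h ∧ (∀ i, q i ∈ N) ∧ ∀ i < n, S.resOut (q (i + 1)) (w i) = q i}

variable {S N}

theorem endsUpTo_subset {n : ℕ} {w : ℕ → X} : S.endsUpTo N n w ⊆ N := by
  rintro _ ⟨q, rfl, hqN, -⟩
  exact hqN 0

theorem ends_subset_endsUpTo {n : ℕ} {w : ℕ → X} : S.ends N w ⊆ S.endsUpTo N n w :=
  fun _ ⟨q, hq0, hqN, hq⟩ => ⟨q, hq0, hqN, fun i _ => hq i⟩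

theorem ends_subset {w : ℕ → X} : S.ends N w ⊆ N :=
  ends_subset_endsUpTo.trans (endsUpTo_subset (n := 0))

theorem endsUpTo_antitone {m n : ℕ} (hmn : m ≤ n) {w : ℕ → X} :
    S.endsUpTo N n w ⊆ S.endsUpTo N m w :=
  fun _ ⟨q, hq0, hqN, hq⟩ => ⟨q, hq0, hqN, fun i hi => hq i (hi.trans_le hmn)⟩

theorem endsUpTo_subset_of_eq {n : ℕ} {w w' : ℕ → X} (hw : ∀ i < n, w i = w' i) :
    S.endsUpTo N n w ⊆ S.endsUpTo N n w' :=
  fun _ ⟨q, hq0, hqN, hq⟩ => ⟨q, hq0, hqN, fun i hi => hw i hi ▸ hq i hi⟩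

theorem mem_ends_iff_moorePath {w' : ℕ → X} {h : G} :
    h ∈ S.ends N w' ↔ ∃ w, S.MoorePath N w w' h := by
  constructor
  · rintro ⟨q, hq0, hqN, hq⟩
    exact ⟨fun i => S.toFun (q (i + 1))⁻¹ (w' i), q, hq0, hqN,
      fun i => ⟨hq i, S.toFun_inv_right _ _⟩⟩
  · rintro ⟨w, q, hq0, hqN, hq⟩
    refine ⟨q, hq0, hqN, fun i => ?_⟩
    rw [resOut, ← (hq i).2, toFun_inv_left, (hq i).1]

/-- König's lemma, via compactness of `∏ᵢ N`. -/
theorem mem_ends_of_forall_mem_endsUpTo {w : ℕ → X} {h : G}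
    (hw : ∀ n, h ∈ S.endsUpTo N n w) : h ∈ S.ends N w := by
  let : TopologicalSpace G := ⊥
  have : DiscreteTopology G := ⟨rfl⟩
  let t : ℕ → Set (ℕ → G) := fun n =>
    {q | q 0 = h ∧ (∀ i, q i ∈ N) ∧ ∀ i < n, S.resOut (q (i + 1)) (w i) = q i}
  have ht : ∀ n, IsClosed (t n) := fun n => by
    simp only [t, Set.ofPred_and, Set.ofPred_forall]
    refine (isClosed_eq (continuous_apply 0) continuous_const).inter
      ((isClosed_iInter fun i => (isClosed_discrete _).preimage (continuous_apply i)).inter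
        (isClosed_iInter fun i => isClosed_iInter fun _ => isClosed_eq ?_ (continuous_apply i)))
    exact (continuous_of_discreteTopology (f := fun a => S.resOut a (w i))).comp
      (continuous_apply (i + 1))
  have ht0 : IsCompact (t 0) :=
    (isCompact_univ_pi fun _ => N.finite_toSet.isCompact).of_isClosed_subset (ht 0)
      fun q hq i _ => hq.2.1 i
  obtain ⟨q, hq⟩ := IsCompact.nonempty_iInter_of_sequence_nonempty_isCompact_isClosed t
    (fun n _ ⟨hq0, hqN, hq⟩ => ⟨hq0, hqN, fun i hi => hq i (by omega)⟩) hw ht0 ht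
  simp only [Set.mem_iInter] at hq
  exact ⟨q, (hq 0).1, (hq 0).2.1, fun i => (hq (i + 1)).2.2 i i.lt_succ_self⟩

theorem exists_endsUpTo_eq_ends (w : ℕ → X) : ∃ K, S.endsUpTo N K w = S.ends N w := by
  have : ∀ h, ∃ n, h ∈ S.endsUpTo N n w → h ∈ S.ends N w := fun h => by
    by_contra! hc
    exact (hc 0).2 (mem_ends_of_forall_mem_endsUpTo fun n => (hc n).1)
  choose n hn using this
  exact ⟨N.sup n, Set.Subset.antisymm
    (fun h hh => hn h (endsUpTo_antitone (N.le_sup (endsUpTo_subset hh)) hh)) ends_subset_endsUpTo⟩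

theorem run_zero_eq_of_eq {w : ℕ → X} {q r : ℕ → G} (n : ℕ)
    (hq : ∀ i < n, S.resOut (q (i + 1)) (w i) = q i)
    (hr : ∀ i < n, S.resOut (r (i + 1)) (w i) = r i) (hn : q n = r n) : q 0 = r 0 := by
  induction n with
  | zero => exact hn
  | succ n ih =>
    refine ih (fun i hi => hq i (by omega)) (fun i hi => hr i (by omega)) ?_
    rw [← hq n n.lt_succ_self, ← hr n n.lt_succ_self, hn]

theorem ncard_ends_le_of_block {w u : ℕ → X} {K j : ℕ} (hblock : ∀ t < K, w (j + t) = u t) :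
    (S.ends N w).ncard ≤ (S.endsUpTo N K u).ncard := by
  choose! Q hQ0 hQN hQ using fun h (hh : h ∈ S.ends N w) => hh
  refine Set.ncard_le_ncard_of_injOn (fun h => Q h j)
    (fun h hh => ⟨fun i => Q h (j + i), rfl, fun i => hQN h hh _, fun i hi => ?_⟩)
    (fun a ha b hb hab => ?_) (N.finite_toSet.subset endsUpTo_subset)
  · rw [← hblock i hi]
    exact hQ h hh _
  · rw [← hQ0 a ha, ← hQ0 b hb]
    exact run_zero_eq_of_eq j (fun i _ => hQ a ha i) (fun i _ => hQ b hb i) hab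

end Ends

section Tiles

variable {G X : Type*} [Group G] {S : SSA G X} {N : Finset G}

theorem tile_nil (S : SSA G X) (N : Finset G) : S.Tile N [] = S.TileT N 1 := by
  simp [Tile, TileT]

theorem IsNucleus.mk_mem_tileT_iff [Nonempty X] (hN : S.IsNucleus N) {w : ℕ → X} {g k : G} :
    Quot.mk _ (w, g) ∈ S.TileT N k ↔ g * k⁻¹ ∈ S.ends N w := by
  rw [mem_ends_iff_moorePath]
  constructor
  · rintro ⟨⟨w', k'⟩, rfl, hp⟩
    exact ⟨w', (hN.mk_eq_mk_iff _ _).1 hp⟩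
  · rintro ⟨w', hw'⟩
    exact ⟨(w', k), rfl, (hN.mk_eq_mk_iff _ _).2 hw'⟩

theorem IsNucleus.setOf_mk_mem_tileT [Nonempty X] (hN : S.IsNucleus N) (w : ℕ → X) (g : G) :
    {k | Quot.mk _ (w, g) ∈ S.TileT N k} = (fun h => h⁻¹ * g) '' S.ends N w := by
  ext k
  simp only [Set.mem_ofPred_eq, hN.mk_mem_tileT_iff, Set.mem_image]
  constructor
  · exact fun hk => ⟨_, hk, by group⟩
  · rintro ⟨h, hh, rfl⟩
    simpa using hh

theorem IsNucleus.ncard_setOf_mk_mem_tileT [Nonempty X] (hN : S.IsNucleus N) (w : ℕ → X) (g : G) :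
    {k | Quot.mk _ (w, g) ∈ S.TileT N k}.ncard = (S.ends N w).ncard := by
  rw [hN.setOf_mk_mem_tileT]
  exact Set.ncard_image_of_injective _ fun a b hab => inv_injective (mul_right_cancel hab)

theorem IsNucleus.mk_mem_biUnion_tileT_iff [Nonempty X] (hN : S.IsNucleus N) {w : ℕ → X} {g : G}
    {K : Set G} : Quot.mk _ (w, g) ∈ ⋃ k ∈ K, S.TileT N k ↔ ∃ h ∈ S.ends N w, h⁻¹ * g ∈ K :=
  Set.mem_iUnion₂.trans ⟨fun ⟨_, hk, hw⟩ => ⟨_, hN.mk_mem_tileT_iff.1 hw, by simpa using hk⟩,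
    fun ⟨_, hw, hk⟩ => ⟨_, hk, hN.mk_mem_tileT_iff.2 (by simpa using hw)⟩⟩

variable [TopologicalSpace X] [DiscreteTopology X]

theorem isClosed_setOf_mem_ends (h : G) : IsClosed {w : ℕ → X | h ∈ S.ends N w} := by
  rw [← isOpen_compl_iff, isOpen_iff_mem_nhds]
  intro w hw
  obtain ⟨n, hn⟩ : ∃ n, h ∉ S.endsUpTo N n w := by
    by_contra! hc
    exact hw (mem_ends_of_forall_mem_endsUpTo hc)
  refine Filter.mem_of_superset ((isOpen_set_pi (Set.finite_Iio n)
    fun i _ => isOpen_discrete {w i}).mem_nhds fun i _ => rfl) fun v hv hvh => hn ?_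
  exact endsUpTo_subset_of_eq (fun i hi => hv i hi) (ends_subset_endsUpTo hvh)

variable [TopologicalSpace G] [DiscreteTopology G]

/-- Every union of tiles is closed: a tile `𝒯·k` meets the slice `X^{-ω} × {g}` only for the
finitely many `k ∈ N⁻¹g`. -/
theorem IsNucleus.isClosed_biUnion_tileT [Nonempty X] (hN : S.IsNucleus N) (K : Set G) :
    IsClosed (⋃ k ∈ K, S.TileT N k) := by
  refine isQuotientMap_quot_mk.isClosed_preimage.1
    (isClosed_of_forall_isClosed_slice fun g => ?_)
  convert (N.finite_toSet.sep fun h => h⁻¹ * g ∈ K).isClosed_biUnion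
    fun h _ => isClosed_setOf_mem_ends (S := S) (N := N) h using 1
  ext w
  refine hN.mk_mem_biUnion_tileT_iff.trans ?_
  simp only [Set.mem_iUnion₂, Set.mem_ofPred_eq, exists_prop]
  exact ⟨fun ⟨h, hw, hk⟩ => ⟨h, ⟨ends_subset hw, hk⟩, hw⟩, fun ⟨h, ⟨_, hk⟩, hw⟩ => ⟨h, hw, hk⟩⟩

end Tiles

section Boundary

variable {G X : Type*} [Group G] {S : SSA G X} {N : Finset G}

theorem measure_setOf_ncard_ends_ne_eq_zero [Fintype X] [Nonempty X] [MeasurableSpace X]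
    {μ0 : Measure (ℕ → X)}
    (hμ0 : ∀ u : List X, μ0 (Cyl u) = ((Fintype.card X : ℝ≥0∞))⁻¹ ^ u.length) {wmin : ℕ → X}
    (hmin : ∀ w, (S.ends N wmin).ncard ≤ (S.ends N w).ncard) :
    μ0 {w | (S.ends N w).ncard ≠ (S.ends N wmin).ncard} = 0 := by
  obtain ⟨K, hK⟩ := exists_endsUpTo_eq_ends (S := S) (N := N) wmin
  refine measure_mono_null ?_ (measure_setOf_forall_block_ne_eq_zero hμ0 fun t : Fin K => wmin t)
  intro w hw j hj
  refine hw (le_antisymm ?_ (hmin w))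
  rw [← hK]
  exact ncard_ends_le_of_block fun t ht => congrFun hj ⟨t, ht⟩

variable [TopologicalSpace X] [DiscreteTopology X] [TopologicalSpace G] [DiscreteTopology G]

theorem IsNucleus.preimage_frontier_tileT_subset [Nonempty X] (hN : S.IsNucleus N) {m : ℕ}
    (hm : ∀ w, m ≤ (S.ends N w).ncard) (k : G) :
    Quot.mk (S.AsympEquiv N) ⁻¹' frontier (S.TileT N k) ⊆
      {w | (S.ends N w).ncard ≠ m} ×ˢ Set.univ := by
  rintro ⟨w, g⟩ hp
  refine ⟨?_, trivial⟩
  have hfin : ∀ p : S.LimitGSpace N, {k | p ∈ S.TileT N k}.Finite := fun p => by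
    obtain ⟨⟨v, d⟩, rfl⟩ := Quot.exists_rep p
    have h := (N.finite_toSet.subset (ends_subset (S := S) (w := v))).image fun h => h⁻¹ * d
    rw [← hN.setOf_mk_mem_tileT] at h
    exact h
  have hm' : ∀ p : S.LimitGSpace N, m ≤ {k | p ∈ S.TileT N k}.ncard := fun p => by
    obtain ⟨⟨v, d⟩, rfl⟩ := Quot.exists_rep p
    exact (hm v).trans_eq (hN.ncard_setOf_mk_mem_tileT v d).symm
  have hpm := frontier_subset_setOf_ncard_ne hN.isClosed_biUnion_tileT hfin hm' k hp
  exact fun h => hpm ((hN.ncard_setOf_mk_mem_tileT w g).trans h)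

end Boundary

end SSA

/-- The topological boundary of the tile `𝒯` in the limit `G`-space has measure zero. -/
theorem stmt_15 {G X : Type*} [Group G] [Fintype X] [Nonempty X]
    [TopologicalSpace X] [DiscreteTopology X] [TopologicalSpace G] [DiscreteTopology G]
    [MeasurableSpace X] [MeasurableSpace G] [MeasurableSingletonClass G] [Countable G]
    (S : SSA G X) (N : Finset G) (hN : S.IsNucleus N)
    (μ0 : Measure (ℕ → X))
    (hμ0 : ∀ u : List X, μ0 (Cyl u) = ((Fintype.card X : ℝ≥0∞))⁻¹ ^ u.length) :
    S.limitMeasure N μ0 (frontier (S.Tile N [])) = 0 := by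
  have := measurableSingletonClass_of_cyl hμ0
  obtain ⟨wmin, hmin⟩ : ∃ wmin : ℕ → X, ∀ w, (S.ends N wmin).ncard ≤ (S.ends N w).ncard :=
    ⟨_, fun w => Function.argmin_le (fun w => (S.ends N w).ncard) w⟩
  rw [S.tile_nil]
  refine (Measure.map_apply (s := frontier (S.TileT N 1)) measurable_quot_mk
    (isClosed_frontier.preimage continuous_quot_mk).measurableSet).trans
    (measure_mono_null (hN.preimage_frontier_tileT_subset hmin 1) ?_)
  rw [Measure.prod_prod, SSA.measure_setOf_ncard_ends_ne_eq_zero hμ0 hmin, zero_mul]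
end

section
/- Let (G,X*) be a contracting self-similar action with nucleus N. Define U ⊂ X^{-ω} as the set of sequences w such that every left-infinite path in the Moore diagram of N labeled by (w,w) ends at the identity element. Then U is open and dense in X^{-ω}, has Bernoulli measure 1 (for any Bernoulli measure with positive letter weights), and U is saturated with respect to the asymptotic equivalence relation on X^{-ω} (if w ∈ U and w' is asymptotically equivalent to w, then w' ∈ U). -/
open MeasureTheory ENNReal

/-- The set `𝒰` of left-infinite sequences `w` such that every left-infinite path in the Moore
diagram of the nucleus labeled `(w, w)` ends at the identity. -/
def USet {G X : Type*} [Group G] (S : SSA G X) (N : Finset G) : Set (ℕ → X) :=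
  {w | ∀ q : ℕ → G, (∀ i, q i ∈ N) →
    (∀ i : ℕ, S.res (q (i + 1)) (w i) = q i ∧ S.toFun (q (i + 1)) (w i) = w i) → q 0 = 1}

/-!
Faithfulness and finiteness of the nucleus give a word `V` such that every `h ∈ N` fixing `V` has
`h|_V = 1`: take `V` minimising the number of such restrictions, since a nontrivial one moves some
word `v` and `V v` would do better. A `(w, w)`-path through a block of `w` spelling `V` passes
through `1`, and `1|_x = 1`, so it ends at `1`: every sequence containing `V` lies in `𝒰`. Hence
`𝒰` is dense, and has full Bernoulli measure since almost every sequence contains a given word.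
Openness is König's lemma: if `w ∈ 𝒰`, a finite prefix of `w` already forces every fixing path to
end at `1`. For saturation, conjugating a `(w', w')`-path by a `(w, w')`-path gives a `(w, w)`-path
with values in the finite set `N⁻¹ N N`, hence in `N` by contraction.
-/

theorem isClopen_of_forall_mem_cylinder {E : Type*} [TopologicalSpace E] [DiscreteTopology E]
    {T : Set (ℕ → E)} (n : ℕ) (hT : ∀ x, ∀ y ∈ PiNat.cylinder x n, (x ∈ T ↔ y ∈ T)) :
    IsClopen T := by
  have isOpen_of : ∀ T' : Set (ℕ → E), (∀ x, ∀ y ∈ PiNat.cylinder x n, (x ∈ T' ↔ y ∈ T')) →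
      IsOpen T' := fun T' hT' => isOpen_iff_forall_mem_open.2 fun x hx =>
    ⟨_, fun y hy => (hT' x y hy).1 hx, PiNat.isOpen_cylinder _ x n, PiNat.self_mem_cylinder x n⟩
  exact ⟨isOpen_compl_iff.1 (isOpen_of _ fun x y hy => not_congr (hT x y hy)), isOpen_of T hT⟩

theorem PiNat.res_add {α : Type*} (w : ℕ → α) (a b : ℕ) :
    PiNat.res w (a + b) = PiNat.res (fun i => w (b + i)) a ++ PiNat.res w b := by
  induction a with
  | zero => simp
  | succ a ih => rw [Nat.add_right_comm, PiNat.res_succ, ih, Nat.add_comm a b]; rfl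

theorem PiNat.res_eq_reverse_of_mem_Cyl {α : Type*} {z : ℕ → α} {u : List α} (hz : z ∈ Cyl u) :
    PiNat.res z u.length = u.reverse := by
  suffices ∀ n ≤ u.length, PiNat.res z n = (u.take n).reverse by simpa using this _ le_rfl
  intro n hn
  induction n with
  | zero => simp
  | succ n ih =>
    rw [PiNat.res_succ, ih (by omega), List.take_succ_eq_append_getElem (by omega), hz n (by omega),
      List.reverse_append]
    rfl

def spliceAt {X : Type*} (w : ℕ → X) (m : ℕ) (u : List X) : ℕ → X :=
  fun j => if h : m ≤ j ∧ j - m < u.length then u[j - m] else w j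

section spliceAt

variable {X : Type*} {w : ℕ → X} {m : ℕ} {u : List X}

theorem spliceAt_of_lt {j : ℕ} (hj : j < m) : spliceAt w m u j = w j := by
  simp [spliceAt, show ¬m ≤ j by omega]

theorem shift_spliceAt_mem_Cyl : (fun i => spliceAt w m u (m + i)) ∈ Cyl u := by
  intro i hi
  simp [spliceAt, hi]

theorem rel_spliceAt {r : X → X → Prop} (hr : ∀ x, r x x)
    (h : ∀ (i : ℕ) (hi : i < u.length), r (w (m + i)) u[i]) (j : ℕ) :
    r (w j) (spliceAt w m u j) := by
  unfold spliceAt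
  split_ifs with hj
  · simpa [Nat.add_sub_cancel' hj.1] using h (j - m) hj.2
  · exact hr _

end spliceAt

section MeasurableAtoms

theorem mem_measurableAtom_pi {ι : Type*} {π : ι → Type*} [∀ i, MeasurableSpace (π i)]
    {w w' : ∀ i, π i} (h : ∀ i, w' i ∈ measurableAtom (w i)) : w' ∈ measurableAtom w := by
  let m : MeasurableSpace (∀ i, π i) :=
    { MeasurableSet' := fun s => (w ∈ s ↔ w' ∈ s)
      measurableSet_empty := Iff.rfl
      measurableSet_compl := fun _ hs => not_congr hs
      measurableSet_iUnion := fun _ hf => by simp only [Set.mem_iUnion]; exact exists_congr hf }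
  have hle : MeasurableSpace.pi ≤ m := iSup_le fun i => MeasurableSpace.comap_le_iff_le_map.2
    fun A hA => show w i ∈ A ↔ w' i ∈ A from
      ⟨mem_of_mem_measurableAtom (h i) hA, mem_of_mem_measurableAtom
        (measurableAtom_eq_of_mem (h i) ▸ mem_measurableAtom_self (w i)) hA⟩
  simp only [measurableAtom, Set.mem_iInter]
  exact fun s hs hms => (hle s hms).1 hs

variable {X : Type*} [MeasurableSpace X] {μ : Measure (ℕ → X)}

theorem mem_toMeasurable_of_forall_mem_measurableAtom {A : Set (ℕ → X)} {w w' : ℕ → X}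
    (hw : w ∈ A) (h : ∀ i, w' i ∈ measurableAtom (w i)) : w' ∈ toMeasurable μ A :=
  mem_of_mem_measurableAtom (mem_measurableAtom_pi h) (measurableSet_toMeasurable μ A)
    (subset_toMeasurable μ A hw)

/-- `Cyl u` need not be measurable when the σ-algebra on `X` is coarse; enlarging it atomwise does
not change its outer measure (`measure_atomCyl`). -/
def atomCyl (u : List X) : Set (ℕ → X) :=
  {w | ∀ (i : ℕ) (h : i < u.length), w i ∈ measurableAtom u[i]}

theorem atomCyl_singleton (x : X) : atomCyl [x] = {w | w 0 ∈ measurableAtom x} := by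
  simp [atomCyl]

theorem measure_atomCyl (u : List X) : μ (atomCyl u) = μ (Cyl u) := by
  refine le_antisymm (le_of_le_of_eq (measure_mono fun w hw => ?_) (measure_toMeasurable _))
    (measure_mono fun w hw i hi => hw i hi ▸ mem_measurableAtom_self _)
  refine mem_toMeasurable_of_forall_mem_measurableAtom (w := spliceAt w 0 u)
    (by simpa using shift_spliceAt_mem_Cyl (w := w) (m := 0) (u := u)) ?_
  exact rel_spliceAt (r := fun a b => a ∈ measurableAtom b) mem_measurableAtom_self
    fun i hi => by simpa using hw i hi

noncomputable def atomRep (x : X) : X :=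
  haveI : Nonempty X := ⟨x⟩
  Classical.epsilon (· ∈ measurableAtom x)

theorem atomRep_mem_measurableAtom (x : X) : atomRep x ∈ measurableAtom x :=
  Classical.epsilon_spec ⟨x, mem_measurableAtom_self x⟩

theorem measurableAtom_atomRep (x : X) : measurableAtom (atomRep x) = measurableAtom x :=
  measurableAtom_eq_of_mem (atomRep_mem_measurableAtom x)

theorem mem_measurableAtom_atomRep (x : X) : x ∈ measurableAtom (atomRep x) :=
  (measurableAtom_atomRep x).symm ▸ mem_measurableAtom_self x

theorem atomRep_congr {x y : X} (h : measurableAtom x = measurableAtom y) :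
    atomRep x = atomRep y := by
  simp only [atomRep, h]

open Classical in
noncomputable def atomReps [Fintype X] : Finset X := Finset.univ.image atomRep

theorem atomRep_mem_atomReps [Fintype X] (x : X) : atomRep x ∈ atomReps := by
  classical
  exact Finset.mem_image_of_mem _ (Finset.mem_univ x)

open Classical in
noncomputable def badBlocks [Fintype X] (u : List X) : Finset (Fin u.length → X) :=
  (Fintype.piFinset fun _ => atomReps).erase fun i => atomRep u[i]

def avoidsBlocks (u : List X) : ℕ → ℕ → Set (ℕ → X)
  | _, 0 => Set.univ
  | m, K + 1 => {w | (fun i => w (m + i)) ∉ atomCyl u} ∩ avoidsBlocks u (m + u.length) K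

theorem atomCyl_inter_avoidsBlocks_succ_subset [Fintype X] (u : List X) (K : ℕ) (v : List X) :
    atomCyl v ∩ avoidsBlocks u v.length (K + 1) ⊆ ⋃ b ∈ badBlocks u,
      atomCyl (v ++ List.ofFn b) ∩ avoidsBlocks u (v ++ List.ofFn b).length K := by
  rintro w ⟨hv, hblock, havoid⟩
  let b : Fin u.length → X := fun i => atomRep (w (v.length + i))
  have hb : b ∈ badBlocks u := by
    classical
    refine Finset.mem_erase.2 ⟨fun heq => hblock fun i hi => ?_,
      Fintype.mem_piFinset.2 fun i => atomRep_mem_atomReps _⟩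
    have := congrFun heq ⟨i, hi⟩
    simp only [b, Fin.getElem_fin] at this
    show w (v.length + i) ∈ _
    rw [← measurableAtom_atomRep, ← this]
    exact mem_measurableAtom_atomRep _
  have hwb : w ∈ atomCyl (v ++ List.ofFn b) := by
    intro i hi
    by_cases hiv : i < v.length
    · simpa [List.getElem_append_left hiv] using hv i hiv
    · rw [List.getElem_append_right (by omega)]
      simpa [b, Nat.add_sub_cancel' (not_lt.1 hiv)] using
        mem_measurableAtom_atomRep (w (v.length + (i - v.length)))
  exact Set.mem_biUnion hb ⟨hwb, by simpa using havoid⟩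

end MeasurableAtoms

section Bernoulli

variable {X : Type*} [MeasurableSpace X] {μ : Measure (ℕ → X)} {p : X → ℝ≥0∞}
  (hμ : ∀ u : List X, μ (Cyl u) = (u.map p).prod)
include hμ

theorem isProbabilityMeasure_of_measure_Cyl : IsProbabilityMeasure μ :=
  ⟨by simpa [Cyl] using hμ []⟩

theorem apply_eq_of_mem_measurableAtom {x y : X} (h : y ∈ measurableAtom x) : p y = p x := by
  calc p y = μ (atomCyl [y]) := by simp [measure_atomCyl, hμ]
    _ = μ (atomCyl [x]) := by rw [atomCyl_singleton, atomCyl_singleton, measurableAtom_eq_of_mem h]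
    _ = p x := by simp [measure_atomCyl, hμ]

variable [Fintype X]

theorem sum_atomReps_eq_one : ∑ r ∈ atomReps, p r = 1 := by
  have hdisj : ((atomReps : Finset X) : Set X).PairwiseDisjoint fun r => atomCyl [r] := by
    classical
    simp only [atomReps, Finset.coe_image, Finset.coe_univ, Set.image_univ]
    rintro _ ⟨x, rfl⟩ _ ⟨y, rfl⟩ hxy
    simp only [Function.onFun, atomCyl_singleton]
    refine Disjoint.preimage _ (disjoint_measurableAtom_of_notMem fun h => hxy ?_)
    exact atomRep_congr (by rw [← measurableAtom_atomRep x, ← measurableAtom_atomRep y,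
      measurableAtom_eq_of_mem h])
  have hcover : ⋃ r ∈ atomReps, atomCyl (X := X) [r] = Set.univ := by
    refine Set.eq_univ_of_forall fun w => Set.mem_biUnion (atomRep_mem_atomReps (w 0)) ?_
    simpa [atomCyl_singleton] using mem_measurableAtom_atomRep (w 0)
  have := isProbabilityMeasure_of_measure_Cyl hμ
  rw [← measure_univ (μ := μ), ← hcover, measure_biUnion_finset hdisj fun r _ => by
    rw [atomCyl_singleton]; exact measurable_pi_apply 0 (.measurableAtom_of_countable r)]
  exact Finset.sum_congr rfl fun r _ => by simp [measure_atomCyl, hμ]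

theorem sum_badBlocks_add (u : List X) :
    ∑ b ∈ badBlocks u, ∏ i, p (b i) + (u.map p).prod = 1 := by
  classical
  have hu : (u.map p).prod = ∏ i : Fin u.length, p (atomRep u[i]) := by
    rw [← Fin.prod_univ_fun_getElem]
    exact Finset.prod_congr rfl fun i _ =>
      (apply_eq_of_mem_measurableAtom hμ (atomRep_mem_measurableAtom _)).symm
  rw [hu, badBlocks, Finset.sum_erase_add _ (fun b => ∏ i, p (b i))
    (Fintype.mem_piFinset.2 fun i => atomRep_mem_atomReps _), ← Finset.prod_univ_sum]
  simp [sum_atomReps_eq_one hμ]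

theorem measure_atomCyl_inter_avoidsBlocks_le (u : List X) (K : ℕ) (v : List X) :
    μ (atomCyl v ∩ avoidsBlocks u v.length K) ≤
      (v.map p).prod * (∑ b ∈ badBlocks u, ∏ i, p (b i)) ^ K := by
  induction K generalizing v with
  | zero =>
    simp [avoidsBlocks, measure_atomCyl, hμ]
  | succ K ih =>
    set B := ∑ b ∈ badBlocks u, ∏ i, p (b i)
    calc μ (atomCyl v ∩ avoidsBlocks u v.length (K + 1))
        ≤ ∑ b ∈ badBlocks u, μ (atomCyl (v ++ List.ofFn b) ∩
            avoidsBlocks u (v ++ List.ofFn b).length K) :=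
          (measure_mono (atomCyl_inter_avoidsBlocks_succ_subset u K v)).trans
            (measure_biUnion_finset_le _ _)
      _ ≤ ∑ b ∈ badBlocks u, (v.map p).prod * ((∏ i, p (b i)) * B ^ K) :=
          Finset.sum_le_sum fun b _ => by
            simpa [List.prod_append, List.prod_ofFn, mul_assoc] using ih (v ++ List.ofFn b)
      _ = (v.map p).prod * B ^ (K + 1) := by
          rw [← Finset.mul_sum, ← Finset.sum_mul, pow_succ, mul_comm (B ^ K)]

/-- Infinite monkey theorem. Outside the measurable hull of `U`, every aligned block at a position
`k * u.length` misses the atoms of `u`; for the first `K` blocks this has measure at most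
`(1 - μ (Cyl u)) ^ K`. -/
theorem measure_eq_one_of_forall_shift_mem_Cyl (hp : ∀ x, p x ≠ 0) (u : List X)
    {U : Set (ℕ → X)} (hU : ∀ w m, (fun i => w (m + i)) ∈ Cyl u → w ∈ U) : μ U = 1 := by
  have := isProbabilityMeasure_of_measure_Cyl hμ
  set B := ∑ b ∈ badBlocks u, ∏ i, p (b i)
  have hB : B < 1 := by
    have h := sum_badBlocks_add hμ u
    have hc : (u.map p).prod ≠ 0 := List.prod_ne_zero (by simpa using fun x _ => hp x)
    exact h ▸ ENNReal.lt_add_right (ne_top_of_le_ne_top one_ne_top (h ▸ le_self_add)) hc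
  have hsub : ∀ K m, (toMeasurable μ U)ᶜ ⊆ avoidsBlocks u m K := by
    intro K
    induction K with
    | zero => exact fun _ => Set.subset_univ _
    | succ K ih =>
      refine fun m w hw => ⟨fun hblock => hw ?_, ih _ hw⟩
      exact mem_toMeasurable_of_forall_mem_measurableAtom (hU _ m shift_spliceAt_mem_Cyl)
        (rel_spliceAt (r := fun a b => a ∈ measurableAtom b) mem_measurableAtom_self hblock)
  have hnull : μ (toMeasurable μ U)ᶜ = 0 := by
    refine le_antisymm (ge_of_tendsto' (ENNReal.tendsto_pow_atTop_nhds_zero_of_lt_one hB)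
      fun K => ?_) bot_le
    calc μ (toMeasurable μ U)ᶜ ≤ μ (atomCyl [] ∩ avoidsBlocks u 0 K) :=
          measure_mono fun w hw => ⟨by simp [atomCyl], hsub K 0 hw⟩
      _ ≤ B ^ K := by simpa using measure_atomCyl_inter_avoidsBlocks_le hμ u K []
  rw [← measure_toMeasurable]
  exact (prob_compl_eq_zero_iff (measurableSet_toMeasurable μ U)).1 hnull

end Bernoulli

namespace SSA

variable {G X : Type*} [Group G] (S : SSA G X)

theorem actW_length (g : G) (v : List X) : (S.actW g v).length = v.length := by
  induction v generalizing g with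
  | nil => rfl
  | cons x v ih => simp [actW, ih]

theorem resW_append (g : G) (u v : List X) : S.resW g (u ++ v) = S.resW (S.resW g u) v := by
  induction u generalizing g with
  | nil => rfl
  | cons x u ih => simp [resW, ih]

theorem actW_append (g : G) (u v : List X) :
    S.actW g (u ++ v) = S.actW g u ++ S.actW (S.resW g u) v := by
  induction u generalizing g with
  | nil => rfl
  | cons x u ih => simp [actW, resW, ih]

theorem actW_append_eq_self_iff {g : G} {u v : List X} :
    S.actW g (u ++ v) = u ++ v ↔ S.actW g u = u ∧ S.actW (S.resW g u) v = v := by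
  rw [actW_append]
  exact ⟨fun h => List.append_inj h (S.actW_length g u), fun h => by rw [h.1, h.2]⟩

theorem toFun_inv_toFun (g : G) (x : X) : S.toFun g⁻¹ (S.toFun g x) = x := by
  rw [← S.toFun_mul, inv_mul_cancel, S.toFun_one]

theorem res_inv_toFun (g : G) (x : X) : S.res g⁻¹ (S.toFun g x) = (S.res g x)⁻¹ := by
  have h := S.res_mul g⁻¹ g x
  rw [inv_mul_cancel, S.res_one] at h
  exact eq_inv_of_mul_eq_one_left h.symm

theorem edge_conj {a a' b b' : G} {x y : X} (ha : S.res a' x = a ∧ S.toFun a' x = y)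
    (hb : S.res b' y = b ∧ S.toFun b' y = y) :
    S.res (a'⁻¹ * b' * a') x = a⁻¹ * b * a ∧ S.toFun (a'⁻¹ * b' * a') x = x := by
  obtain ⟨rfl, rfl⟩ := ha
  obtain ⟨rfl, hby⟩ := hb
  refine ⟨?_, ?_⟩
  · rw [S.res_mul, S.res_mul, hby, S.res_inv_toFun, mul_assoc]
  · rw [S.toFun_mul, S.toFun_mul, hby, S.toFun_inv_toFun]

variable {S} {N : Finset G}

section Paths

variable {w w' : ℕ → X} {q : ℕ → G}

theorem resW_res_of_edges (hq : ∀ i, S.res (q (i + 1)) (w i) = q i) (n : ℕ) :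
    S.resW (q n) (PiNat.res w n) = q 0 := by
  induction n with
  | zero => rfl
  | succ n ih => simp [resW, hq n, ih]

theorem actW_res_of_edges
    (hq : ∀ i, S.res (q (i + 1)) (w i) = q i ∧ S.toFun (q (i + 1)) (w i) = w' i) (n : ℕ) :
    S.actW (q n) (PiNat.res w n) = PiNat.res w' n := by
  induction n with
  | zero => rfl
  | succ n ih => simp [actW, (hq n).1, (hq n).2, ih]

theorem eq_one_of_edges_of_eq_one (hq : ∀ i, S.res (q (i + 1)) (w i) = q i) {m : ℕ}
    (hm : q m = 1) : q 0 = 1 := by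
  induction m with
  | zero => exact hm
  | succ m ih => exact ih (by rw [← hq m, hm, S.res_one])

theorem IsNucleus.mem_of_edges (hN : S.IsNucleus N) (hfin : (Set.range q).Finite)
    (hq : ∀ i, S.res (q (i + 1)) (w i) = q i) (i : ℕ) : q i ∈ N := by
  choose k hk using hN.2.1
  obtain ⟨K, hK⟩ := (hfin.image k).bddAbove
  have := resW_res_of_edges (q := fun j => q (i + j)) (w := fun j => w (i + j))
    (fun j => hq (i + j)) K
  rw [← show q (i + 0) = q i from rfl, ← this]
  exact hk _ _ (by simpa using hK ⟨_, ⟨i + K, rfl⟩, rfl⟩)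

end Paths

variable (S N) in
open Classical in
noncomputable def fixRes (V : List X) : Finset G :=
  (N.filter fun h => S.actW h V = V).image fun h => S.resW h V

theorem mem_fixRes {V : List X} {g : G} :
    g ∈ S.fixRes N V ↔ ∃ h ∈ N, S.actW h V = V ∧ S.resW h V = g := by
  simp [fixRes, and_assoc]

theorem resW_mem (hcl : ∀ g ∈ N, ∀ x, S.res g x ∈ N) {g : G} (hg : g ∈ N) (v : List X) :
    S.resW g v ∈ N := by
  induction v generalizing g with
  | nil => exact hg
  | cons x v ih => exact ih (hcl g hg x)

theorem fixRes_subset (hcl : ∀ g ∈ N, ∀ x, S.res g x ∈ N) (V : List X) : S.fixRes N V ⊆ N :=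
  fun _ hg => by
    obtain ⟨h, hN, -, rfl⟩ := mem_fixRes.1 hg
    exact resW_mem hcl hN V

theorem card_fixRes_append_lt {V v : List X} {g : G} (hg : g ∈ S.fixRes N V)
    (hv : S.actW g v ≠ v) : (S.fixRes N (V ++ v)).card < (S.fixRes N V).card := by
  classical
  have hsub : S.fixRes N (V ++ v) ⊆
      ((S.fixRes N V).filter fun a => S.actW a v = v).image fun a => S.resW a v := by
    intro b hb
    obtain ⟨h, hN, hfix, rfl⟩ := mem_fixRes.1 hb
    rw [S.actW_append_eq_self_iff] at hfix
    exact Finset.mem_image.2 ⟨S.resW h V, Finset.mem_filter.2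
      ⟨mem_fixRes.2 ⟨h, hN, hfix.1, rfl⟩, hfix.2⟩, (S.resW_append h V v).symm⟩
  calc (S.fixRes N (V ++ v)).card ≤ ((S.fixRes N V).filter fun a => S.actW a v = v).card :=
        (Finset.card_le_card hsub).trans Finset.card_image_le
    _ < (S.fixRes N V).card :=
        Finset.card_lt_card (Finset.filter_ssubset.2 ⟨g, hg, hv⟩)

theorem exists_fixRes_subset_one (hcl : ∀ g ∈ N, ∀ x, S.res g x ∈ N)
    (hfaith : ∀ h ∈ N, h ≠ 1 → ∃ v : List X, S.actW h v ≠ v) :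
    ∃ V : List X, S.fixRes N V ⊆ {1} := by
  refine ⟨Function.argmin fun V => (S.fixRes N V).card, fun g hg => Finset.mem_singleton.2 ?_⟩
  by_contra hg1
  obtain ⟨v, hv⟩ := hfaith g (fixRes_subset hcl _ hg) hg1
  exact Function.not_lt_argmin (fun V => (S.fixRes N V).card) _ (card_fixRes_append_lt hg hv)

theorem mem_USet_of_fixRes_subset_one {w : ℕ → X} {m n : ℕ}
    (h : S.fixRes N (PiNat.res (fun i => w (m + i)) n) ⊆ {1}) : w ∈ USet S N := by
  intro q hqN hq
  refine eq_one_of_edges_of_eq_one (fun i => (hq i).1) (m := m) (Finset.mem_singleton.1 (h ?_))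
  exact mem_fixRes.2 ⟨q (m + n), hqN _,
    actW_res_of_edges (q := fun i => q (m + i)) (fun i => hq (m + i)) n,
    resW_res_of_edges (q := fun i => q (m + i)) (fun i => (hq (m + i)).1) n⟩

/-- Words are read from the top of a path down, so the block of `w` at `m` spells `V` backwards. -/
theorem mem_USet_of_shift_mem_Cyl {V : List X} (hV : S.fixRes N V ⊆ {1}) {w : ℕ → X} {m : ℕ}
    (h : (fun i => w (m + i)) ∈ Cyl V.reverse) : w ∈ USet S N :=
  mem_USet_of_fixRes_subset_one (m := m) (n := V.length) (by
    rwa [← V.length_reverse, PiNat.res_eq_reverse_of_mem_Cyl h, List.reverse_reverse])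

theorem exists_edges_of_mem_fixRes (hcl : ∀ g ∈ N, ∀ x, S.res g x ∈ N) {w : ℕ → X} {n : ℕ}
    {g : G} (hg : g ∈ S.fixRes N (PiNat.res w n)) :
    ∃ q : ℕ → G, q 0 = g ∧ (∀ i, q i ∈ N) ∧
      ∀ i < n, S.res (q (i + 1)) (w i) = q i ∧ S.toFun (q (i + 1)) (w i) = w i := by
  obtain ⟨h, hN, hfix, rfl⟩ := mem_fixRes.1 hg
  refine ⟨fun i => S.resW h (PiNat.res (fun j => w (i + j)) (n - i)), by simp,
    fun i => resW_mem hcl hN _, fun i hi => ?_⟩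
  obtain ⟨k, rfl⟩ : ∃ k, n = k + 1 + i := ⟨n - (i + 1), by omega⟩
  have hsplit : PiNat.res (fun j => w (i + j)) (k + 1) =
      PiNat.res (fun j => w (i + 1 + j)) k ++ [w i] := by
    rw [PiNat.res_add _ k 1]
    simp [Nat.add_assoc]
  rw [PiNat.res_add w (k + 1) i, hsplit, actW_append_eq_self_iff, actW_append_eq_self_iff] at hfix
  simp only [show k + 1 + i - i = k + 1 by omega, show k + 1 + i - (i + 1) = k by omega, hsplit,
    S.resW_append]
  simpa [actW, resW] using hfix.1.2

theorem exists_fixRes_res_subset_one (hcl : ∀ g ∈ N, ∀ x, S.res g x ∈ N) {w : ℕ → X}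
    (hw : w ∈ USet S N) : ∃ n, S.fixRes N (PiNat.res w n) ⊆ {1} := by
  by_contra! h
  let _ : TopologicalSpace G := ⊥
  have : DiscreteTopology G := ⟨rfl⟩
  let Z : ℕ → Set (ℕ → G) := fun n => Set.univ.pi (fun _ => (N : Set G)) ∩
    {q | q 0 ≠ 1 ∧ ∀ i < n, S.res (q (i + 1)) (w i) = q i ∧ S.toFun (q (i + 1)) (w i) = w i}
  have hclosed : ∀ n, IsClosed (Z n) := by
    refine fun n => (isClosed_set_pi fun _ _ => isClosed_discrete _).inter
      (isClopen_of_forall_mem_cylinder (n + 1) fun q q' hq' => ?_).isClosed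
    have e := PiNat.mem_cylinder_iff.1 hq'
    simp only [Set.mem_ofPred_eq]
    exact and_congr (by rw [e 0 (by omega)])
      (forall₂_congr fun i hi => by rw [e i (by omega), e (i + 1) (by omega)])
  have hanti : ∀ n, Z (n + 1) ⊆ Z n :=
    fun n q hq => ⟨hq.1, hq.2.1, fun i hi => hq.2.2 i (by omega)⟩
  have hne : ∀ n, (Z n).Nonempty := fun n => by
    obtain ⟨g, hg, hg1⟩ := Finset.not_subset.1 (h n)
    obtain ⟨q, rfl, hqN, hq⟩ := exists_edges_of_mem_fixRes hcl hg
    exact ⟨q, fun i _ => hqN i, by simpa using hg1, hq⟩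
  have hcpt : IsCompact (Z 0) := (isCompact_univ_pi fun _ => N.finite_toSet.isCompact)
    |>.of_isClosed_subset (hclosed 0) Set.inter_subset_left
  obtain ⟨q, hq⟩ := IsCompact.nonempty_iInter_of_sequence_nonempty_isCompact_isClosed Z hanti hne
    hcpt hclosed
  simp only [Set.mem_iInter] at hq
  exact (hq 0).2.1 (hw q (fun i => (hq 0).1 i trivial) fun i => (hq (i + 1)).2.2 i (by omega))

theorem isOpen_USet [TopologicalSpace X] [DiscreteTopology X]
    (hcl : ∀ g ∈ N, ∀ x, S.res g x ∈ N) : IsOpen (USet S N) := by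
  have hU : USet S N = ⋃ n, {w | S.fixRes N (PiNat.res w n) ⊆ {1}} :=
    Set.ext fun w => ⟨fun hw => Set.mem_iUnion.2 (exists_fixRes_res_subset_one hcl hw),
      fun hw => by
        obtain ⟨n, hn⟩ := Set.mem_iUnion.1 hw
        exact mem_USet_of_fixRes_subset_one (m := 0) (n := n) (by simpa using hn)⟩
  rw [hU]
  refine isOpen_iUnion fun n => (isClopen_of_forall_mem_cylinder n fun w w' hw' => ?_).isOpen
  rw [Set.mem_ofPred_eq, Set.mem_ofPred_eq, PiNat.res_eq_res.2 (PiNat.mem_cylinder_iff.1 hw')]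

theorem dense_USet [TopologicalSpace X] [DiscreteTopology X] {V : List X}
    (hV : S.fixRes N V ⊆ {1}) : Dense (USet S N) := by
  refine (PiNat.isTopologicalBasis_cylinders fun _ => X).dense_iff.2 ?_
  rintro _ ⟨w, n, rfl⟩ -
  exact ⟨spliceAt w n V.reverse, fun i hi => spliceAt_of_lt hi,
    mem_USet_of_shift_mem_Cyl hV shift_spliceAt_mem_Cyl⟩

theorem mem_USet_of_moorePath (hN : S.IsNucleus N) {w w' : ℕ → X} {h : G} (hw : w ∈ USet S N)
    (hww' : S.MoorePath N w w' h) : w' ∈ USet S N := by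
  obtain ⟨a, -, haN, ha⟩ := hww'
  intro b hbN hb
  let c : ℕ → G := fun i => (a i)⁻¹ * b i * a i
  have hc : ∀ i, S.res (c (i + 1)) (w i) = c i ∧ S.toFun (c (i + 1)) (w i) = w i :=
    fun i => S.edge_conj (ha i) (hb i)
  have hfin : (Set.range c).Finite :=
    ((N.finite_toSet.prod N.finite_toSet).image fun x : G × G => x.1⁻¹ * x.2 * x.1).subset
      (Set.range_subset_iff.2 fun i => ⟨(a i, b i), ⟨haN i, hbN i⟩, rfl⟩)
  have hc0 : (a 0)⁻¹ * b 0 * (a 0)⁻¹⁻¹ = 1 := by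
    simpa using hw c (hN.mem_of_edges hfin fun i => (hc i).1) hc
  exact conj_eq_one_iff.1 hc0

end SSA

theorem stmt_16_general {G X : Type*} [Group G] [Fintype X]
    [TopologicalSpace X] [DiscreteTopology X] [MeasurableSpace X]
    (S : SSA G X) (N : Finset G) (hN : S.IsNucleus N)
    (hfaith : ∀ h ∈ N, h ≠ 1 → ∃ v : List X, S.actW h v ≠ v) :
    IsOpen (USet S N) ∧ Dense (USet S N) ∧
    (∀ (p : X → ℝ≥0∞) (μ0 : Measure (ℕ → X)), (∀ x, p x ≠ 0) →
      (∀ u : List X, μ0 (Cyl u) = (u.map p).prod) → μ0 (USet S N) = 1) ∧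
    (∀ w ∈ USet S N, ∀ w' : ℕ → X, (∃ h : G, S.MoorePath N w w' h) → w' ∈ USet S N) := by
  obtain ⟨V, hV⟩ := SSA.exists_fixRes_subset_one hN.1 hfaith
  refine ⟨SSA.isOpen_USet hN.1, SSA.dense_USet hV, fun p μ0 hp hμ => ?_,
    fun w hw w' ⟨h, hww'⟩ => SSA.mem_USet_of_moorePath hN hw hww'⟩
  exact measure_eq_one_of_forall_shift_mem_Cyl hμ hp V.reverse fun w m hm =>
    SSA.mem_USet_of_shift_mem_Cyl hV hm

/-- For a contracting faithful self-similar action with nucleus `N`, the set `𝒰` is open and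
dense in `X^{-ω}`, has measure `1` for every Bernoulli measure with positive letter weights,
and is saturated with respect to the asymptotic equivalence relation on `X^{-ω}`. -/
theorem stmt_16 {G X : Type*} [Group G] [Fintype X] [Nonempty X]
    [TopologicalSpace X] [DiscreteTopology X] [MeasurableSpace X]
    (S : SSA G X) (N : Finset G) (hN : S.IsNucleus N)
    (hfaith : ∀ h ∈ N, h ≠ 1 → ∃ v : List X, S.actW h v ≠ v) :
    IsOpen (USet S N) ∧ Dense (USet S N) ∧
    (∀ (p : X → ℝ≥0∞) (μ0 : Measure (ℕ → X)), (∀ x, p x ≠ 0) →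
      (∀ u : List X, μ0 (Cyl u) = (u.map p).prod) → μ0 (USet S N) = 1) ∧
    (∀ w ∈ USet S N, ∀ w' : ℕ → X, (∃ h : G, S.MoorePath N w w' h) → w' ∈ USet S N) :=
  stmt_16_general S N hN hfaith
end

section
/- Let Γ be a finite strictly right-resolving labeled graph over a finite alphabet X containing a vertex v₀ such that from every vertex there is a path to v₀, and for each x ∈ X there is a loop at v₀ labeled x. Then the measure number of Γ equals 1, i.e., Σ_v μ_p(F_v) = 1 for any Bernoulli measure μ_p with positive letter probabilities. -/
/-!
Every vertex reaches the absorbing vertex `v₀`, so concatenating words that drive the vertices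
one after another to `v₀` gives a synchronizing word `s`: reading `s` from any vertex ends at `v₀`.
A word containing `s` as a factor therefore has a single possible endpoint. Cutting the last
`k |s|` letters of a sequence into `k` blocks of length `|s|`, the sequences in which no block is
synchronizing have measure at most `r ^ k` with `r < 1`, which bounds `Σ_v μ(F_v)` by
`1 + |V| r ^ k`. Conversely `F_{v₀}` is everything, so the sum is at least `1`.
-/

open MeasureTheory ENNReal

/-- The left-infinite sequence `w = ...x₂x₁` (with `w 0 = x₁` the rightmost letter)
ends at the vertex `v` of the `X`-labeled directed graph with edge relation `E`:
there is a left-infinite path `...e₂e₁` ending at `v` whose `i`-th edge is labeled `xᵢ`. -/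
def EndsInf {V X : Type*} (E : V → X → V → Prop) (w : ℕ → X) (v : V) : Prop :=
  ∃ p : ℕ → V, p 0 = v ∧ ∀ i : ℕ, E (p (i + 1)) (w i) (p i)

/-- The finite word `u = xₙ...x₂x₁` (encoded as the list `[x₁, x₂, ..., xₙ]`, head = rightmost
letter) ends at the vertex `v`: some finite path ending at `v` is labeled by `u`. -/
def EndsFin {V X : Type*} (E : V → X → V → Prop) (u : List X) (v : V) : Prop :=
  ∃ p : ℕ → V, p 0 = v ∧ ∀ (i : ℕ) (h : i < u.length), E (p (i + 1)) (u.get ⟨i, h⟩) (p i)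

/-- The right-infinite sequence `w = x₁x₂...` (with `w 0 = x₁` the first letter) starts at the
vertex `v`: there is a right-infinite path starting at `v` labeled by `w`. -/
def StartsInf {V X : Type*} (E : V → X → V → Prop) (w : ℕ → X) (v : V) : Prop :=
  ∃ p : ℕ → V, p 0 = v ∧ ∀ i : ℕ, E (p i) (w i) (p (i + 1))

/-- The graph is right-resolving: the outgoing edges at each vertex have distinct labels. -/
def RightResolving {V X : Type*} (E : V → X → V → Prop) : Prop :=
  ∀ v x u u', E v x u → E v x u' → u = u'

open Finset

section Reading

variable {V X : Type*} (δ : V → X → V)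

/-- The head of `u` is its rightmost letter, so it is read last. -/
def readWord (q : V) (u : List X) : V :=
  u.foldr (fun x v => δ v x) q

@[simp] lemma readWord_cons (q : V) (x : X) (u : List X) :
    readWord δ q (x :: u) = δ (readWord δ q u) x := rfl

lemma readWord_append (q : V) (u u' : List X) :
    readWord δ q (u ++ u') = readWord δ (readWord δ q u') u :=
  List.foldr_append

def IsSynchronizing (u : List X) : Prop :=
  ∀ q q', readWord δ q u = readWord δ q' u

variable {δ}

lemma IsSynchronizing.of_isInfix {s u : List X} (hs : IsSynchronizing δ s) (h : s <:+: u) :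
    IsSynchronizing δ u := by
  obtain ⟨a, b, rfl⟩ := h
  intro q q'
  simp only [readWord_append, hs (readWord δ q b) (readWord δ q' b)]

lemma IsSynchronizing.card_image_readWord_le_one [Fintype V] [DecidableEq V] {u : List X}
    (hu : IsSynchronizing δ u) : (univ.image fun q => readWord δ q u).card ≤ 1 := by
  simp only [Finset.card_le_one, mem_image, mem_univ, true_and]
  rintro _ ⟨q, rfl⟩ _ ⟨q', rfl⟩
  exact hu q q'

lemma readWord_eq_self_of_forall {v₀ : V} (hfix : ∀ x, δ v₀ x = v₀) (u : List X) :
    readWord δ v₀ u = v₀ := by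
  induction u with
  | nil => rfl
  | cons x u ih => rw [readWord_cons, ih, hfix]

lemma exists_forall_readWord_eq [Finite V] {v₀ : V} (hfix : ∀ x, δ v₀ x = v₀)
    (hreach : ∀ v, ∃ u : List X, readWord δ v u = v₀) :
    ∃ u : List X, ∀ v, readWord δ v u = v₀ := by
  classical
  have : Fintype V := Fintype.ofFinite V
  suffices ∀ S : Finset V, ∃ u : List X, ∀ v ∈ S, readWord δ v u = v₀ by
    simpa using this univ
  intro S
  induction S using Finset.induction_on with
  | empty => exact ⟨[], by simp⟩
  | insert a S _ ih =>
    obtain ⟨u, hu⟩ := ih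
    obtain ⟨s, hs⟩ := hreach (readWord δ a u)
    refine ⟨s ++ u, fun v hv => ?_⟩
    rcases mem_insert.mp hv with rfl | hv
    · rw [readWord_append, hs]
    · rw [readWord_append, hu v hv, readWord_eq_self_of_forall hfix]

variable {E : V → X → V → Prop}

lemma exists_readWord_eq_of_path (hE : ∀ v x u, E v x u → δ v x = u) (n : ℕ) (q : ℕ → V)
    (l : ℕ → X) (hq : ∀ i < n, E (q i) (l i) (q (i + 1))) :
    ∃ u : List X, readWord δ (q 0) u = q n := by
  induction n with
  | zero => exact ⟨[], rfl⟩
  | succ n ih =>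
    obtain ⟨u, hu⟩ := ih fun i hi => hq i (by omega)
    exact ⟨l n :: u, by rw [readWord_cons, hu, hE _ _ _ (hq n n.lt_succ_self)]⟩

lemma eq_readWord_of_mem_cyl (hE : ∀ v x u, E v x u → δ v x = u) {w : ℕ → X} {path : ℕ → V}
    (hpath : ∀ i, E (path (i + 1)) (w i) (path i)) {u : List X} (hw : w ∈ Cyl u) :
    path 0 = readWord δ (path u.length) u := by
  induction u generalizing w path with
  | nil => rfl
  | cons x u ih =>
    have hx : w 0 = x := hw 0 (by simp)
    have htail : (fun i => w (i + 1)) ∈ Cyl u := fun i hi => hw (i + 1) (by simpa using hi)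
    have h1 := ih (path := fun i => path (i + 1)) (fun i => hpath (i + 1)) htail
    rw [List.length_cons, readWord_cons, ← h1, ← hx, hE _ _ _ (hpath 0)]

lemma sum_measure_endsInf_le [Fintype V] [DecidableEq V] {ι : Type*} [Fintype ι]
    (hE : ∀ v x u, E v x u → δ v x = u) [MeasurableSpace X] (μ : Measure (ℕ → X))
    (word : ι → List X) (hcov : ∀ w, ∃ i, w ∈ Cyl (word i)) :
    ∑ v, μ {w | EndsInf E w v} ≤
      ∑ i, ((univ.image fun q => readWord δ q (word i)).card : ℝ≥0∞) * μ (Cyl (word i)) := by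
  have hsub : ∀ v, {w | EndsInf E w v} ⊆
      ⋃ i ∈ univ.filter (fun i => v ∈ univ.image fun q => readWord δ q (word i)),
        Cyl (word i) := by
    rintro v w ⟨path, rfl, hpath⟩
    obtain ⟨i, hi⟩ := hcov w
    refine Set.mem_biUnion (mem_filter.mpr ⟨mem_univ i, mem_image.mpr ?_⟩) hi
    exact ⟨path (word i).length, mem_univ _, (eq_readWord_of_mem_cyl hE hpath hi).symm⟩
  calc ∑ v, μ {w | EndsInf E w v}
      ≤ ∑ v, ∑ i ∈ univ.filter (fun i => v ∈ univ.image fun q => readWord δ q (word i)),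
          μ (Cyl (word i)) :=
        sum_le_sum fun v _ => (measure_mono (hsub v)).trans (measure_biUnion_finset_le _ _)
    _ = ∑ i, ∑ _v ∈ univ.image (fun q => readWord δ q (word i)), μ (Cyl (word i)) :=
        sum_comm' (by simp)
    _ = _ := by simp only [sum_const, nsmul_eq_mul]

end Reading

section Estimates

variable {ι : Type*} [Fintype ι]

lemma sum_lt_one_of_notMem (B : ι → ℝ≥0∞) (hB : ∑ h, B h = 1) {s : Finset ι} {h₀ : ι}
    (hh₀ : h₀ ∉ s) (hB₀ : B h₀ ≠ 0) : ∑ h ∈ s, B h < 1 := by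
  classical
  have hle : ∑ h ∈ s, B h + B h₀ ≤ 1 := by
    rw [add_comm, ← sum_insert hh₀, ← hB]
    exact sum_le_univ_sum_of_nonneg fun _ => zero_le
  have hne : ∑ h ∈ s, B h ≠ ⊤ := ne_top_of_le_ne_top one_ne_top (le_self_add.trans hle)
  exact (ENNReal.lt_add_right hne hB₀).trans_le hle

lemma sum_mul_prod_le_one_add (B : ι → ℝ≥0∞) (hB : ∑ h, B h = 1) (good : ι → Prop)
    [DecidablePred good] {k : ℕ} (c : (Fin k → ι) → ℝ≥0∞) (N : ℝ≥0∞)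
    (hgood : ∀ g j, good (g j) → c g ≤ 1) (hN : ∀ g, c g ≤ N) :
    ∑ g, c g * ∏ j, B (g j) ≤ 1 + N * (∑ h ∈ univ.filter (fun h => ¬ good h), B h) ^ k := by
  classical
  set bad := Fintype.piFinset fun _ : Fin k => univ.filter fun h => ¬ good h
  have hc : ∀ g, c g ≤ 1 + if g ∈ bad then N else 0 := by
    intro g
    split_ifs with hg
    · exact (hN g).trans le_add_self
    · obtain ⟨j, hj⟩ : ∃ j, good (g j) := by simpa [bad] using hg
      simpa using hgood g j hj
  calc ∑ g, c g * ∏ j, B (g j)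
      ≤ ∑ g, (1 + if g ∈ bad then N else 0) * ∏ j, B (g j) :=
        sum_le_sum fun g _ => mul_le_mul_left (hc g) _
    _ = ∑ g : Fin k → ι, ∏ j, B (g j) + N * ∑ g ∈ bad, ∏ j, B (g j) := by
        simp only [add_mul, sum_add_distrib, ite_mul, zero_mul, one_mul, ← sum_filter,
          filter_mem_eq_inter, univ_inter, mul_sum]
    _ = 1 + N * (∑ h ∈ univ.filter (fun h => ¬ good h), B h) ^ k := by
        rw [← Fintype.prod_sum, ← prod_univ_sum, prod_const, prod_const, hB, one_pow,
          card_univ, Fintype.card_fin]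

lemma le_of_forall_le_add_mul_pow {a b C r : ℝ≥0∞} (hC : C ≠ ⊤) (hr : r < 1)
    (h : ∀ k : ℕ, a ≤ b + C * r ^ k) : a ≤ b := by
  have hlim : Filter.Tendsto (fun k : ℕ => b + C * r ^ k) Filter.atTop (nhds (b + C * 0)) :=
    tendsto_const_nhds.add
      (ENNReal.Tendsto.const_mul (ENNReal.tendsto_pow_atTop_nhds_zero_of_lt_one hr) (Or.inr hC))
  simpa using ge_of_tendsto' hlim h

end Estimates

theorem sum_measure_endsInf_le_one {V X : Type*} [Fintype V] [Fintype X] [MeasurableSpace X]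
    {E : V → X → V → Prop} {δ : V → X → V} (hE : ∀ v x u, E v x u → δ v x = u) {s : List X}
    (hs : IsSynchronizing δ s) (p : X → ℝ≥0∞) (hp : ∀ x, p x ≠ 0) (hp1 : ∑ x, p x = 1)
    (μ : Measure (ℕ → X)) (hμ : ∀ u : List X, μ (Cyl u) = (u.map p).prod) :
    ∑ v, μ {w | EndsInf E w v} ≤ 1 := by
  classical
  set m := s.length
  let B : (Fin m → X) → ℝ≥0∞ := fun h => ∏ i, p (h i)
  have hB : ∑ h, B h = 1 := by simp only [B, ← Fintype.prod_sum, hp1, prod_const_one]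
  have hr : ∑ h ∈ univ.filter (fun h => ¬ IsSynchronizing δ (List.ofFn h)), B h < 1 :=
    sum_lt_one_of_notMem B hB (h₀ := s.get) (by simpa using hs)
      (prod_ne_zero_iff.mpr fun i _ => hp _)
  refine le_of_forall_le_add_mul_pow (C := Fintype.card V) (natCast_ne_top _) hr fun k => ?_
  let word : (Fin k → Fin m → X) → List X := fun g => (List.ofFn fun j => List.ofFn (g j)).flatten
  have hcov : ∀ w : ℕ → X, ∃ g, w ∈ Cyl (word g) := by
    intro w
    refine ⟨fun j i => w (j * m + i), ?_⟩
    rw [show word _ = _ from (List.ofFn_mul fun a : Fin (k * m) => w a).symm]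
    intro i hi
    simp
  calc ∑ v, μ {w | EndsInf E w v}
      ≤ ∑ g, ((univ.image fun q => readWord δ q (word g)).card : ℝ≥0∞) * μ (Cyl (word g)) :=
        sum_measure_endsInf_le hE μ word hcov
    _ = ∑ g, ((univ.image fun q => readWord δ q (word g)).card : ℝ≥0∞) * ∏ j, B (g j) := by
        simp only [hμ, word, B, List.map_flatten, List.prod_flatten, List.map_ofFn,
          List.prod_ofFn, Function.comp_def]
    _ ≤ 1 + Fintype.card V * _ :=
        sum_mul_prod_le_one_add B hB _ _ _
          (fun g j hj => by exact_mod_cast (hj.of_isInfix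
            (List.infix_of_mem_flatten (List.mem_ofFn.mpr ⟨j, rfl⟩))).card_image_readWord_le_one)
          (fun g => by exact_mod_cast card_le_univ _)

theorem stmt_18_general {V X : Type*} [Fintype V] [Fintype X] [MeasurableSpace X]
    (E : V → X → V → Prop)
    (hsrr : ∀ (v : V) (x : X), ∃! u : V, E v x u)
    (v₀ : V)
    (hreach : ∀ v : V, ∃ (n : ℕ) (q : ℕ → V) (l : ℕ → X),
      q 0 = v ∧ q n = v₀ ∧ ∀ i < n, E (q i) (l i) (q (i + 1)))
    (hloop : ∀ x : X, E v₀ x v₀)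
    (p : X → ℝ≥0∞) (hp : ∀ x, p x ≠ 0) (hp1 : ∑ x, p x = 1)
    (μ : Measure (ℕ → X)) (hμ : ∀ u : List X, μ (Cyl u) = (u.map p).prod) :
    ∑ v : V, μ {w | EndsInf E w v} = 1 := by
  choose δ hδ using fun v x => (hsrr v x).exists
  have hE : ∀ v x u, E v x u → δ v x = u := fun v x u h => (hsrr v x).unique (hδ v x) h
  obtain ⟨s, hs⟩ := exists_forall_readWord_eq (fun x => hE _ _ _ (hloop x)) fun v => by
    obtain ⟨n, q, l, rfl, rfl, hq⟩ := hreach v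
    exact exists_readWord_eq_of_path hE n q l hq
  refine le_antisymm
    (sum_measure_endsInf_le_one hE (fun q q' => (hs q).trans (hs q').symm) p hp hp1 μ hμ) ?_
  have hF₀ : {w | EndsInf E w v₀} = Set.univ :=
    Set.eq_univ_of_forall fun w => ⟨fun _ => v₀, rfl, fun i => hloop (w i)⟩
  have hμ_univ : μ Set.univ = 1 := by simpa [Cyl] using hμ []
  calc (1 : ℝ≥0∞) = μ {w | EndsInf E w v₀} := by rw [hF₀, hμ_univ]
    _ ≤ ∑ v, μ {w | EndsInf E w v} :=
        single_le_sum (f := fun v => μ {w | EndsInf E w v}) (fun _ _ => zero_le) (mem_univ v₀)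

/-- If a finite strictly right-resolving labeled graph has a vertex `v₀` reachable from every
vertex and carrying a loop labeled `x` for every letter `x`, then its measure number is `1`:
`Σ_v μ(F_v) = 1` for every Bernoulli measure with positive letter probabilities. -/
theorem stmt_18 {V X : Type*} [Fintype V] [Fintype X] [Nonempty X] [MeasurableSpace X]
    (E : V → X → V → Prop)
    (hsrr : ∀ (v : V) (x : X), ∃! u : V, E v x u)
    (v₀ : V)
    (hreach : ∀ v : V, ∃ (n : ℕ) (q : ℕ → V) (l : ℕ → X),
      q 0 = v ∧ q n = v₀ ∧ ∀ i < n, E (q i) (l i) (q (i + 1)))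
    (hloop : ∀ x : X, E v₀ x v₀)
    (p : X → ℝ≥0∞) (hp : ∀ x, p x ≠ 0) (hp1 : ∑ x, p x = 1)
    (μ : Measure (ℕ → X)) (hμ : ∀ u : List X, μ (Cyl u) = (u.map p).prod) :
    ∑ v : V, μ {w | EndsInf E w v} = 1 :=
  stmt_18_general E hsrr v₀ hreach hloop p hp hp1 μ hμ
end
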